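/- Let M be a closed L-invariant set. Then: (i) S_l* K_M ⊂ K_M for all l ∈ L; (ii) H(M) is a reducing subspace for the operators (S_l)_{l∈L}, i.e., invariant under every S_l and every S_l*; (iii) if M_1 and M_2 are closed L-invariant sets with dist(M_1,M_2) > 0, then H(M_1) and H(M_2) are orthogonal subspaces of L²(μ_B). -/

import Mathlib

/-!
Self-similarity of `μ_B` turns `∫ e_s · (H ∘ 𝓡) dμ_B` into `χ_B(R⁻ᵀ s) ∫ e_{R⁻ᵀ s} · H dμ_B`.
Combined with the two orthogonality relations of the Hadamard matrix this yields the Cuntz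
relations `S_l^* S_{l'} = δ_{l l'}`, the formula `S_l^* e_{-t} = conj χ_B(τ_l t) · e_{-τ_l t}`,
and the refinement `e_{-t} = Σ_l conj χ_B(τ_l t) · S_l e_{-τ_l t}`. Terms with
`χ_B(τ_l t) = 0` vanish, and the other ones stay inside an `L`-invariant `M`: this gives (i)
and (ii). For (iii), refining both exponentials expresses `⟪e_{-t}, e_{-t'}⟫` through pairs
`(τ_l t, τ_l t') ∈ M₁ × M₂`; after `n` refinements their distance is at most `cⁿ dist(t, t')`,
below the separation of `M₁` and `M₂` for large `n`, so the inner product vanishes. The Cuntz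
relations and the adjoint formula reduce inner products of words to that case.
-/

open MeasureTheory Complex Filter Topology

noncomputable section

def expv {d : ℕ} (t x : Fin d → ℝ) : ℂ :=
  Complex.exp (2 * Real.pi * Complex.I * (∑ i, t i * x i))

def Rmat {d : ℕ} (R : Matrix (Fin d) (Fin d) ℤ) : Matrix (Fin d) (Fin d) ℝ :=
  R.map Int.cast

def vecR {d : ℕ} (b : Fin d → ℤ) : Fin d → ℝ := fun i => (b i : ℝ)

def tauB {d : ℕ} (R : Matrix (Fin d) (Fin d) ℤ) (b : Fin d → ℤ) (x : Fin d → ℝ) :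
    Fin d → ℝ :=
  (Rmat R)⁻¹.mulVec (x + vecR b)

def tauL {d : ℕ} (R : Matrix (Fin d) (Fin d) ℤ) (l : Fin d → ℤ) (x : Fin d → ℝ) :
    Fin d → ℝ :=
  ((Rmat R).transpose)⁻¹.mulVec (x + vecR l)

/-- `σ_l(x) = Rᵀ x + l`. -/
def sigmaL {d : ℕ} (R : Matrix (Fin d) (Fin d) ℤ) (l : Fin d → ℤ) (x : Fin d → ℝ) :
    Fin d → ℝ :=
  (Rmat R).transpose.mulVec x + vecR l

def Expansive {d : ℕ} (R : Matrix (Fin d) (Fin d) ℤ) : Prop :=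
  ∀ z : ℂ, (R.map (Int.cast : ℤ → ℂ)).charpoly.IsRoot z → 1 < ‖z‖

def chiB {d : ℕ} (B : Finset (Fin d → ℤ)) (x : Fin d → ℝ) : ℂ :=
  (B.card : ℂ)⁻¹ * ∑ b ∈ B, expv (vecR b) x

def hadMat {d : ℕ} (R : Matrix (Fin d) (Fin d) ℤ) (B L : Finset (Fin d → ℤ)) :
    Matrix B L ℂ :=
  fun b l => ((Real.sqrt (B.card) : ℝ) : ℂ)⁻¹ *
    expv ((Rmat R)⁻¹.mulVec (vecR (b : Fin d → ℤ))) (vecR (l : Fin d → ℤ))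

def IsHadamardPair {d : ℕ} (R : Matrix (Fin d) (Fin d) ℤ)
    (B L : Finset (Fin d → ℤ)) : Prop :=
  (hadMat R B L).conjTranspose * hadMat R B L = 1 ∧
    hadMat R B L * (hadMat R B L).conjTranspose = 1


/-- `M` is `L`-invariant: possible transitions starting in `M` stay in `M`. -/
def LInvariant {d : ℕ} (R : Matrix (Fin d) (Fin d) ℤ) (B L : Finset (Fin d → ℤ))
    (M : Set (Fin d → ℝ)) : Prop :=
  ∀ x ∈ M, ∀ l ∈ L, chiB B (tauL R l x) ≠ 0 → tauL R l x ∈ M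

/-- Two sets are separated when they are at positive `dist'`-distance. -/
def SepSets {d : ℕ} (dist' : (Fin d → ℝ) → (Fin d → ℝ) → ℝ)
    (M₁ M₂ : Set (Fin d → ℝ)) : Prop :=
  ∃ δ > 0, ∀ x ∈ M₁, ∀ y ∈ M₂, δ ≤ dist' x y

/-- `K_M`: the closed span of `{e_{-t} : t ∈ M}`. -/
def KM {d : ℕ} {μ : MeasureTheory.Measure (Fin d → ℝ)}
    (E : (Fin d → ℝ) → MeasureTheory.Lp ℂ 2 μ) (M : Set (Fin d → ℝ)) :
    Submodule ℂ (MeasureTheory.Lp ℂ 2 μ) :=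
  (Submodule.span ℂ {g | ∃ t ∈ M, g = E (-t)}).topologicalClosure

/-- `H(M)`: the closed span of `{S_{l_1} ⋯ S_{l_n} e_{-t} : t ∈ M, l_i ∈ L, n ≥ 0}`. -/
def HM {d : ℕ} {μ : MeasureTheory.Measure (Fin d → ℝ)}
    (E : (Fin d → ℝ) → MeasureTheory.Lp ℂ 2 μ)
    (S : (Fin d → ℤ) → (MeasureTheory.Lp ℂ 2 μ →L[ℂ] MeasureTheory.Lp ℂ 2 μ))
    (L : Finset (Fin d → ℤ)) (M : Set (Fin d → ℝ)) :
    Submodule ℂ (MeasureTheory.Lp ℂ 2 μ) :=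
  (Submodule.span ℂ {g | ∃ t ∈ M, ∃ w : List (Fin d → ℤ),
    (∀ l ∈ w, l ∈ L) ∧ g = (w.map S).prod (E (-t))}).topologicalClosure

open scoped ComplexConjugate InnerProductSpace Matrix

section Expv

variable {d : ℕ}

lemma expv_eq_exp_dotProduct (t x : Fin d → ℝ) :
    expv t x = Complex.exp (2 * Real.pi * Complex.I * ((t ⬝ᵥ x : ℝ) : ℂ)) := rfl

lemma expv_comm (t x : Fin d → ℝ) : expv t x = expv x t := by
  simp only [expv_eq_exp_dotProduct, dotProduct_comm t x]

lemma expv_add_left (s t x : Fin d → ℝ) : expv (s + t) x = expv s x * expv t x := by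
  simp only [expv_eq_exp_dotProduct, add_dotProduct, ← Complex.exp_add]
  push_cast
  ring_nf

lemma expv_add_right (t x y : Fin d → ℝ) : expv t (x + y) = expv t x * expv t y := by
  rw [expv_comm, expv_add_left, expv_comm x, expv_comm y]

lemma expv_zero_left (x : Fin d → ℝ) : expv 0 x = 1 := by
  simp [expv_eq_exp_dotProduct]

lemma expv_zero_right (t : Fin d → ℝ) : expv t 0 = 1 := by
  rw [expv_comm, expv_zero_left]

lemma expv_neg_left (t x : Fin d → ℝ) : expv (-t) x = (expv t x)⁻¹ := by
  simp only [expv_eq_exp_dotProduct, neg_dotProduct, ← Complex.exp_neg]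
  push_cast
  ring_nf

lemma expv_neg_right (t x : Fin d → ℝ) : expv t (-x) = expv (-t) x := by
  rw [expv_comm, expv_neg_left, expv_neg_left, expv_comm]

lemma conj_expv (t x : Fin d → ℝ) : conj (expv t x) = expv (-t) x := by
  rw [expv_neg_left, expv_eq_exp_dotProduct, ← Complex.exp_conj, ← Complex.exp_neg]
  simp only [map_mul, Complex.conj_I, Complex.conj_ofReal, map_ofNat]
  ring_nf

lemma norm_expv (t x : Fin d → ℝ) : ‖expv t x‖ = 1 := by
  rw [expv_eq_exp_dotProduct, Complex.norm_exp]
  simp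

lemma expv_mulVec (A : Matrix (Fin d) (Fin d) ℝ) (t x : Fin d → ℝ) :
    expv t (A *ᵥ x) = expv (Aᵀ *ᵥ t) x := by
  rw [expv_eq_exp_dotProduct, expv_eq_exp_dotProduct, Matrix.dotProduct_mulVec,
    Matrix.mulVec_transpose]

lemma continuous_expv (t : Fin d → ℝ) : Continuous (expv t) := by
  unfold expv
  fun_prop

end Expv

section Matrix

variable {d : ℕ} {R : Matrix (Fin d) (Fin d) ℤ}

lemma Expansive.isUnit_det (hR : Expansive R) : IsUnit (Rmat R).det := by
  rw [isUnit_iff_ne_zero]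
  intro h
  have hdet : R.det = 0 := by
    rw [Rmat, ← Int.cast_det] at h
    exact_mod_cast h
  have hC : (R.map (Int.cast : ℤ → ℂ)).det = 0 := by
    rw [← Int.cast_det, hdet, Int.cast_zero]
  -- `det A = ± charpoly(A)(0)`, so a singular `R` has the eigenvalue `0`
  have hroot : (R.map (Int.cast : ℤ → ℂ)).charpoly.IsRoot 0 := by
    rw [Polynomial.IsRoot, ← Polynomial.coeff_zero_eq_eval_zero]
    simpa [hC] using Matrix.det_eq_sign_charpoly_coeff (R.map (Int.cast : ℤ → ℂ))
  exact absurd (hR 0 hroot) (by simp)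

lemma mulVec_tauB (hR : Expansive R) (b : Fin d → ℤ) (x : Fin d → ℝ) :
    Rmat R *ᵥ tauB R b x = x + vecR b := by
  rw [tauB, Matrix.mulVec_mulVec, Matrix.mul_nonsing_inv _ hR.isUnit_det, Matrix.one_mulVec]

lemma transpose_mulVec_tauL (hR : Expansive R) (l : Fin d → ℤ) (t : Fin d → ℝ) :
    (Rmat R)ᵀ *ᵥ tauL R l t = t + vecR l := by
  rw [tauL, Matrix.mulVec_mulVec,
    Matrix.mul_nonsing_inv _ (by rw [Matrix.det_transpose]; exact hR.isUnit_det),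
    Matrix.one_mulVec]

lemma expv_tauB (s : Fin d → ℝ) (b : Fin d → ℤ) (x : Fin d → ℝ) :
    expv s (tauB R b x) = expv ((Rmat R)ᵀ⁻¹ *ᵥ s) x * expv ((Rmat R)ᵀ⁻¹ *ᵥ s) (vecR b) := by
  rw [tauB, expv_mulVec, Matrix.transpose_nonsing_inv, expv_add_right]

lemma expv_tauL (v : Fin d → ℝ) (l : Fin d → ℤ) (t : Fin d → ℝ) :
    expv v (tauL R l t) = expv ((Rmat R)⁻¹ *ᵥ v) t * expv ((Rmat R)⁻¹ *ᵥ v) (vecR l) := by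
  rw [tauL, expv_mulVec, ← Matrix.transpose_nonsing_inv, Matrix.transpose_transpose,
    expv_add_right]

lemma expv_mul_expv_neg_tauL (hR : Expansive R) (l b : Fin d → ℤ) (t x : Fin d → ℝ) :
    expv (vecR l) x * expv (-tauL R l t) (Rmat R *ᵥ x - vecR b)
      = expv (-t) x * expv (tauL R l t) (vecR b) := by
  have hl : expv (vecR l) x * expv (-vecR l) x = 1 := by
    rw [← expv_add_left, add_neg_cancel, expv_zero_left]
  rw [sub_eq_add_neg, expv_add_right, expv_mulVec, Matrix.mulVec_neg, transpose_mulVec_tauL hR,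
    expv_neg_right, neg_neg, neg_add, expv_add_left]
  linear_combination expv (-t) x * expv (tauL R l t) (vecR b) * hl

lemma continuous_tauB (R : Matrix (Fin d) (Fin d) ℤ) (b : Fin d → ℤ) : Continuous (tauB R b) :=
  continuous_const.matrix_mulVec (continuous_id.add continuous_const)

end Matrix

section SelfSimilar

variable {α ι : Type*} [MeasurableSpace α] {μ : Measure α} {B : Finset ι} {τ : ι → α → α}

lemma sum_map_eq_card_smul (hμ : μ = (B.card : ENNReal)⁻¹ • ∑ b ∈ B, μ.map (τ b))
    (hB : B.Nonempty) : ∑ b ∈ B, μ.map (τ b) = (B.card : ENNReal) • μ := by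
  conv_rhs => rw [hμ]
  rw [smul_smul, ENNReal.mul_inv_cancel (by simpa using hB.ne_empty) (by simp), one_smul]

lemma map_le_card_smul (hμ : μ = (B.card : ENNReal)⁻¹ • ∑ b ∈ B, μ.map (τ b)) {b : ι}
    (hb : b ∈ B) : μ.map (τ b) ≤ (B.card : ENNReal) • μ := by
  rw [← sum_map_eq_card_smul hμ ⟨b, hb⟩]
  refine Measure.le_iff'.mpr fun s => ?_
  rw [Measure.finsetSum_apply]
  exact Finset.single_le_sum (f := fun b => μ.map (τ b) s) (fun _ _ => zero_le) hb

lemma quasiMeasurePreserving_of_eq_avg (hμ : μ = (B.card : ENNReal)⁻¹ • ∑ b ∈ B, μ.map (τ b))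
    {b : ι} (hb : b ∈ B) (hτ : Measurable (τ b)) : Measure.QuasiMeasurePreserving (τ b) μ μ :=
  ⟨hτ, Measure.absolutelyContinuous_of_le_smul (map_le_card_smul hμ hb)⟩

lemma measurePreserving_of_eq_avg (hμ : μ = (B.card : ENNReal)⁻¹ • ∑ b ∈ B, μ.map (τ b))
    (hB : B.Nonempty) (hτ : ∀ b ∈ B, Measurable (τ b)) {𝓡 : α → α} (h𝓡 : Measurable 𝓡)
    (hinv : ∀ b ∈ B, ∀ᵐ x ∂μ, 𝓡 (τ b x) = x) : MeasurePreserving 𝓡 μ μ := by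
  refine ⟨h𝓡, ?_⟩
  have hmap : ∀ b ∈ B, (μ.map (τ b)).map 𝓡 = μ := fun b hb => by
    rw [Measure.map_map h𝓡 (hτ b hb), Measure.map_congr (f := 𝓡 ∘ τ b) (g := id) (hinv b hb),
      Measure.map_id]
  have hcard : (B.card : ENNReal) ≠ 0 := by simpa using hB.ne_empty
  conv_lhs => rw [hμ]
  rw [Measure.map_smul, ← Measure.mapₗ_apply_of_measurable h𝓡, map_sum,
    Finset.sum_congr rfl fun b hb => (Measure.mapₗ_apply_of_measurable h𝓡 _).trans (hmap b hb),
    Finset.sum_const, ← Nat.cast_smul_eq_nsmul ENNReal, smul_smul,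
    ENNReal.inv_mul_cancel hcard (by simp), one_smul]

variable {G : Type*} [NormedAddCommGroup G] [NormedSpace ℝ G]

lemma integral_eq_avg (hμ : μ = (B.card : ENNReal)⁻¹ • ∑ b ∈ B, μ.map (τ b))
    (hτ : ∀ b ∈ B, Measurable (τ b)) {g : α → G} (hg : Integrable g μ) :
    ∫ x, g x ∂μ = (B.card : ℝ)⁻¹ • ∑ b ∈ B, ∫ x, g (τ b x) ∂μ := by
  have hgb : ∀ b ∈ B, Integrable g (μ.map (τ b)) := fun b hb =>
    (hg.smul_measure (by simp)).mono_measure (map_le_card_smul hμ hb)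
  conv_lhs => rw [hμ]
  rw [integral_smul_measure, integral_finsetSum_measure hgb, ENNReal.toReal_inv,
    ENNReal.toReal_natCast]
  congr 1
  refine Finset.sum_congr rfl fun b hb => ?_
  exact integral_map (hτ b hb).aemeasurable (hgb b hb).aestronglyMeasurable

end SelfSimilar

section Branches

variable {d : ℕ} {R : Matrix (Fin d) (Fin d) ℤ} {B : Finset (Fin d → ℤ)} {X : Set (Fin d → ℝ)}
  {μ : Measure (Fin d → ℝ)} {𝓡 : (Fin d → ℝ) → Fin d → ℝ}

lemma ae_comp_tauB_eq (hR : Expansive R)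
    (hμ : μ = (B.card : ENNReal)⁻¹ • ∑ b ∈ B, μ.map (tauB R b)) (hμX : μ Xᶜ = 0)
    (h𝓡 : ∀ b ∈ B, ∀ᵐ x ∂(μ.restrict (tauB R b '' X)), 𝓡 x = Rmat R *ᵥ x - vecR b)
    {b : Fin d → ℤ} (hb : b ∈ B) : ∀ᵐ x ∂μ, 𝓡 (tauB R b x) = x := by
  have hq := quasiMeasurePreserving_of_eq_avg hμ hb (continuous_tauB R b).measurable
  filter_upwards [hq.ae (ae_imp_of_ae_restrict (h𝓡 b hb)), mem_ae_iff.mpr hμX] with x hx hxX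
  rw [hx ⟨x, hxX, rfl⟩, mulVec_tauB hR, add_sub_cancel_right]

lemma ae_exists_eq_mulVec_sub (hX : X = ⋃ b ∈ B, tauB R b '' X) (hμX : μ Xᶜ = 0)
    (h𝓡 : ∀ b ∈ B, ∀ᵐ x ∂(μ.restrict (tauB R b '' X)), 𝓡 x = Rmat R *ᵥ x - vecR b) :
    ∀ᵐ x ∂μ, ∃ b ∈ B, 𝓡 x = Rmat R *ᵥ x - vecR b := by
  filter_upwards [mem_ae_iff.mpr hμX,
    (eventually_all_finset B).mpr fun b hb => ae_imp_of_ae_restrict (h𝓡 b hb)] with x hxX hx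
  rw [hX, Set.mem_iUnion₂] at hxX
  obtain ⟨b, hb, hxb⟩ := hxX
  exact ⟨b, hb, hx b hb hxb⟩

end Branches

section Hadamard

variable {d : ℕ} {R : Matrix (Fin d) (Fin d) ℤ} {B L : Finset (Fin d → ℤ)}

lemma hadMat_mul_star (b b' : B) (l l' : L) :
    hadMat R B L b l * star (hadMat R B L b' l') = (B.card : ℂ)⁻¹ *
      (expv ((Rmat R)⁻¹ *ᵥ vecR b) (vecR l) * expv (-((Rmat R)⁻¹ *ᵥ vecR b')) (vecR l')) := by
  have hsqrt :
      ((Real.sqrt B.card : ℝ) : ℂ)⁻¹ * ((Real.sqrt B.card : ℝ) : ℂ)⁻¹ = (B.card : ℂ)⁻¹ := by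
    rw [← mul_inv, ← Complex.ofReal_mul, Real.mul_self_sqrt (Nat.cast_nonneg _),
      Complex.ofReal_natCast]
  simp only [hadMat, star_mul', RCLike.star_def, map_inv₀, Complex.conj_ofReal, conj_expv]
  rw [← hsqrt]
  ring

lemma chiB_transpose_inv_mulVec (v : Fin d → ℝ) :
    chiB B ((Rmat R)ᵀ⁻¹ *ᵥ v) = (B.card : ℂ)⁻¹ * ∑ b ∈ B, expv ((Rmat R)⁻¹ *ᵥ vecR b) v := by
  simp only [chiB, expv_mulVec, Matrix.transpose_nonsing_inv, Matrix.transpose_transpose]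

lemma IsHadamardPair.chiB_eq_zero (h : IsHadamardPair R B L) {l l' : Fin d → ℤ} (hl : l ∈ L)
    (hl' : l' ∈ L) (hne : l ≠ l') : chiB B ((Rmat R)ᵀ⁻¹ *ᵥ (vecR l' - vecR l)) = 0 := by
  have h0 := congrFun (congrFun h.1 ⟨l, hl⟩) ⟨l', hl'⟩
  rw [Matrix.mul_apply, Matrix.one_apply_ne (by simpa using hne)] at h0
  rw [← h0, chiB_transpose_inv_mulVec, Finset.mul_sum, ← Finset.sum_coe_sort B]
  refine Finset.sum_congr rfl fun b _ => ?_
  rw [Matrix.conjTranspose_apply, mul_comm (star _), hadMat_mul_star, sub_eq_add_neg,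
    expv_add_right, expv_neg_right]

lemma IsHadamardPair.sum_expv_eq_zero (h : IsHadamardPair R B L) {b b' : Fin d → ℤ}
    (hb : b ∈ B) (hb' : b' ∈ B) (hne : b ≠ b') :
    ∑ l ∈ L, expv ((Rmat R)⁻¹ *ᵥ (vecR b - vecR b')) (vecR l) = 0 := by
  have h0 := congrFun (congrFun h.2 ⟨b, hb⟩) ⟨b', hb'⟩
  rw [Matrix.mul_apply, Matrix.one_apply_ne (by simpa using hne)] at h0
  have hcard : (B.card : ℂ)⁻¹ ≠ 0 := by simpa using Finset.ne_empty_of_mem hb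
  refine (mul_eq_zero.mp ?_).resolve_left hcard
  rw [← h0, Finset.mul_sum, ← Finset.sum_coe_sort L]
  refine Finset.sum_congr rfl fun l _ => ?_
  rw [Matrix.conjTranspose_apply, hadMat_mul_star, Matrix.mulVec_sub, sub_eq_add_neg,
    expv_add_left]

lemma chiB_mul_expv_neg (b : Fin d → ℤ) (y : Fin d → ℝ) :
    chiB B y * expv (-y) (vecR b) = (B.card : ℂ)⁻¹ * ∑ b' ∈ B, expv (vecR b' - vecR b) y := by
  rw [chiB, mul_assoc, Finset.sum_mul]
  congr 1
  refine Finset.sum_congr rfl fun b' _ => ?_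
  rw [← expv_neg_right, expv_comm (vecR b'), ← expv_add_right, ← sub_eq_add_neg, expv_comm]

lemma IsHadamardPair.sum_chiB_tauL_mul_expv (h : IsHadamardPair R B L) (hcard : L.card = B.card)
    {b : Fin d → ℤ} (hb : b ∈ B) (t : Fin d → ℝ) :
    ∑ l ∈ L, chiB B (tauL R l t) * expv (-tauL R l t) (vecR b) = 1 := by
  set c : (Fin d → ℤ) → Fin d → ℝ := fun b' => (Rmat R)⁻¹ *ᵥ (vecR b' - vecR b)
  have hB : (B.card : ℂ) ≠ 0 := by simpa using Finset.ne_empty_of_mem hb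
  calc ∑ l ∈ L, chiB B (tauL R l t) * expv (-tauL R l t) (vecR b)
      = ∑ l ∈ L, (B.card : ℂ)⁻¹ * ∑ b' ∈ B, expv (c b') t * expv (c b') (vecR l) := by
        simp only [chiB_mul_expv_neg, expv_tauL, c]
    _ = (B.card : ℂ)⁻¹ * ∑ b' ∈ B, expv (c b') t * ∑ l ∈ L, expv (c b') (vecR l) := by
        rw [← Finset.mul_sum, Finset.sum_comm]
        simp only [Finset.mul_sum]
    _ = (B.card : ℂ)⁻¹ * (1 * L.card) := by
        rw [Finset.sum_eq_single_of_mem b hb fun b' hb' hne => by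
          rw [h.sum_expv_eq_zero hb' hb hne, mul_zero]]
        simp [c, expv_zero_left]
    _ = 1 := by rw [hcard, one_mul, inv_mul_cancel₀ hB]

end Hadamard

section ClosedSpan

variable {𝕜 E : Type*} [RCLike 𝕜] [NormedAddCommGroup E] [InnerProductSpace 𝕜 E]

lemma Submodule.mapsTo_topologicalClosure_span {T : E →L[𝕜] E} {s : Set E} {K : Submodule 𝕜 E}
    (hK : IsClosed (K : Set E)) (hT : ∀ x ∈ s, T x ∈ K) :
    ∀ x ∈ (span 𝕜 s).topologicalClosure, T x ∈ K := fun _ hx =>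
  topologicalClosure_minimal (span 𝕜 s) (t := K.comap (T : E →ₗ[𝕜] E)) (span_le.mpr hT)
    (hK.preimage T.continuous) hx

lemma Submodule.IsOrtho.topologicalClosure {U V : Submodule 𝕜 E} (h : U ⟂ V) :
    U.topologicalClosure ⟂ V.topologicalClosure := by
  rw [isOrtho_iff_le, orthogonal_closure]
  exact topologicalClosure_minimal U (isOrtho_iff_le.mp h) (isClosed_orthogonal _)

end ClosedSpan

-- `𝓡` enters only through `𝓡 ∘ τ_b = id` and `𝓡 x ∈ {R x - b | b ∈ B}`, both `μ`-a.e.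
structure HadamardSetup {d : ℕ} (R : Matrix (Fin d) (Fin d) ℤ) (B L : Finset (Fin d → ℤ))
    (μ : Measure (Fin d → ℝ)) (𝓡 : (Fin d → ℝ) → Fin d → ℝ)
    (S : (Fin d → ℤ) → Lp ℂ 2 μ →L[ℂ] Lp ℂ 2 μ) (E : (Fin d → ℝ) → Lp ℂ 2 μ) : Prop where
  expansive : Expansive R
  nonempty : B.Nonempty
  eq_avg : μ = (B.card : ENNReal)⁻¹ • ∑ b ∈ B, μ.map (tauB R b)
  measurable : Measurable 𝓡
  comp_tauB : ∀ b ∈ B, ∀ᵐ x ∂μ, 𝓡 (tauB R b x) = x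
  exists_eq : ∀ᵐ x ∂μ, ∃ b ∈ B, 𝓡 x = Rmat R *ᵥ x - vecR b
  hadamard : IsHadamardPair R B L
  card_eq : L.card = B.card
  S_apply : ∀ l ∈ L, ∀ f : Lp ℂ 2 μ,
    (S l f : (Fin d → ℝ) → ℂ) =ᵐ[μ] fun x => expv (vecR l) x * f (𝓡 x)
  E_apply : ∀ t : Fin d → ℝ, (E t : (Fin d → ℝ) → ℂ) =ᵐ[μ] fun x => expv t x

namespace HadamardSetup

variable {d : ℕ} {R : Matrix (Fin d) (Fin d) ℤ} {B L : Finset (Fin d → ℤ)}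
  {μ : Measure (Fin d → ℝ)} {𝓡 : (Fin d → ℝ) → Fin d → ℝ}
  {S : (Fin d → ℤ) → Lp ℂ 2 μ →L[ℂ] Lp ℂ 2 μ} {E : (Fin d → ℝ) → Lp ℂ 2 μ}
  (h : HadamardSetup R B L μ 𝓡 S E)
include h

lemma measurePreserving : MeasurePreserving 𝓡 μ μ :=
  measurePreserving_of_eq_avg h.eq_avg h.nonempty (fun b _ => (continuous_tauB R b).measurable)
    h.measurable h.comp_tauB

lemma chiB_zero : chiB B 0 = 1 := by
  have hB : (B.card : ℂ) ≠ 0 := by simpa using h.nonempty.ne_empty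
  simp only [chiB, expv_zero_right, Finset.sum_const, nsmul_eq_mul, mul_one, inv_mul_cancel₀ hB]

lemma integral_expv_mul_comp (s : Fin d → ℝ) {H : (Fin d → ℝ) → ℂ} (hH : Integrable H μ) :
    ∫ x, expv s x * H (𝓡 x) ∂μ
      = chiB B ((Rmat R)ᵀ⁻¹ *ᵥ s) * ∫ x, expv ((Rmat R)ᵀ⁻¹ *ᵥ s) x * H x ∂μ := by
  have hint : Integrable (fun x => expv s x * H (𝓡 x)) μ :=
    ((h.measurePreserving.integrable_comp hH.aestronglyMeasurable).mpr hH).bdd_mul (c := 1)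
      (continuous_expv s).aestronglyMeasurable (ae_of_all _ fun x => (norm_expv s x).le)
  have hbranch : ∀ b ∈ B, ∫ x, expv s (tauB R b x) * H (𝓡 (tauB R b x)) ∂μ
      = expv (vecR b) ((Rmat R)ᵀ⁻¹ *ᵥ s) * ∫ x, expv ((Rmat R)ᵀ⁻¹ *ᵥ s) x * H x ∂μ := by
    intro b hb
    rw [← integral_const_mul]
    refine integral_congr_ae ?_
    filter_upwards [h.comp_tauB b hb] with x hx
    rw [hx, expv_tauB, expv_comm (vecR b)]
    ring
  rw [integral_eq_avg h.eq_avg (fun b _ => (continuous_tauB R b).measurable) hint,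
    Finset.sum_congr rfl hbranch, ← Finset.sum_mul, chiB, Complex.real_smul, ← mul_assoc]
  push_cast
  rfl

lemma inner_E_neg (t : Fin d → ℝ) (g : Lp ℂ 2 μ) :
    ⟪E (-t), g⟫_ℂ = ∫ x, expv t x * g x ∂μ := by
  rw [L2.inner_def]
  refine integral_congr_ae ?_
  filter_upwards [h.E_apply (-t)] with x hx
  rw [RCLike.inner_apply', hx, conj_expv, neg_neg]

-- the Cuntz relations `S_l^* S_{l'} = δ_{l l'}`
lemma inner_S_S {l l' : Fin d → ℤ} (hl : l ∈ L) (hl' : l' ∈ L) (f g : Lp ℂ 2 μ) :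
    ⟪S l f, S l' g⟫_ℂ = if l = l' then ⟪f, g⟫_ℂ else 0 := by
  have hfg : Integrable (fun x => conj (f x) * g x) μ := by
    simpa only [RCLike.inner_apply'] using L2.integrable_inner (𝕜 := ℂ) f g
  have hS : (fun x => ⟪S l f x, S l' g x⟫_ℂ)
      =ᵐ[μ] fun x => expv (vecR l' - vecR l) x * (conj (f (𝓡 x)) * g (𝓡 x)) := by
    filter_upwards [h.S_apply l hl f, h.S_apply l' hl' g] with x hf hg
    rw [RCLike.inner_apply', hf, hg, map_mul, conj_expv, sub_eq_add_neg, expv_add_left]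
    ring
  rw [L2.inner_def, integral_congr_ae hS, h.integral_expv_mul_comp _ hfg]
  split_ifs with hll
  · subst hll
    simp only [sub_self, Matrix.mulVec_zero, h.chiB_zero, expv_zero_left, one_mul, L2.inner_def,
      RCLike.inner_apply']
  · rw [h.hadamard.chiB_eq_zero hl hl' hll, zero_mul]

lemma adjoint_S_S {l l' : Fin d → ℤ} (hl : l ∈ L) (hl' : l' ∈ L) (g : Lp ℂ 2 μ) :
    (S l).adjoint (S l' g) = if l = l' then g else 0 :=
  ext_inner_right ℂ fun v => by
    rw [ContinuousLinearMap.adjoint_inner_left, h.inner_S_S hl' hl]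
    by_cases hll : l = l'
    · subst hll
      simp
    · rw [if_neg (Ne.symm hll), if_neg hll, inner_zero_left]

lemma S_E_ae_eq {l : Fin d → ℤ} (hl : l ∈ L) (s : Fin d → ℝ) :
    ∀ᵐ x ∂μ, S l (E s) x = expv (vecR l) x * expv s (𝓡 x) := by
  filter_upwards [h.S_apply l hl (E s),
    h.measurePreserving.quasiMeasurePreserving.ae (h.E_apply s)] with x hS hE
  rw [hS, hE]

-- `Σ_l S_l S_l^* = 1` on exponentials
lemma E_neg_eq_sum (t : Fin d → ℝ) :
    E (-t) = ∑ l ∈ L, conj (chiB B (tauL R l t)) • S l (E (-tauL R l t)) := by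
  refine Lp.ext ?_
  filter_upwards [h.E_apply (-t), h.exists_eq,
    Lp.coeFn_fun_finsetSum L fun l => conj (chiB B (tauL R l t)) • S l (E (-tauL R l t)),
    (eventually_all_finset L).mpr fun l hl =>
      (Lp.coeFn_smul (conj (chiB B (tauL R l t))) (S l (E (-tauL R l t)))).and
        (h.S_E_ae_eq hl (-tauL R l t))]
    with x hE ⟨b, hb, hxb⟩ hsum hS
  have hone : ∑ l ∈ L, conj (chiB B (tauL R l t)) * expv (tauL R l t) (vecR b) = 1 := by
    simpa only [map_sum, map_mul, conj_expv, neg_neg, map_one] using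
      congrArg conj (h.hadamard.sum_chiB_tauL_mul_expv h.card_eq hb t)
  rw [hE, hsum]
  calc expv (-t) x
      = ∑ l ∈ L, conj (chiB B (tauL R l t)) * (expv (-t) x * expv (tauL R l t) (vecR b)) := by
        simp only [mul_left_comm _ (expv (-t) x), ← Finset.mul_sum, hone, mul_one]
    _ = ∑ l ∈ L, (conj (chiB B (tauL R l t)) • S l (E (-tauL R l t))) x := by
        refine Finset.sum_congr rfl fun l hl => ?_
        rw [(hS l hl).1, Pi.smul_apply, (hS l hl).2, smul_eq_mul, hxb,
          expv_mul_expv_neg_tauL h.expansive]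

variable [IsFiniteMeasure μ]

lemma inner_E_neg_S {l : Fin d → ℤ} (hl : l ∈ L) (t : Fin d → ℝ) (v : Lp ℂ 2 μ) :
    ⟪E (-t), S l v⟫_ℂ = chiB B (tauL R l t) * ⟪E (-tauL R l t), v⟫_ℂ := by
  rw [h.inner_E_neg, h.inner_E_neg]
  have hv : (fun x => expv t x * S l v x) =ᵐ[μ] fun x => expv (t + vecR l) x * v (𝓡 x) := by
    filter_upwards [h.S_apply l hl v] with x hx
    rw [hx, expv_add_left, mul_assoc]
  rw [integral_congr_ae hv, h.integral_expv_mul_comp _ ((Lp.memLp v).integrable one_le_two)]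
  rfl

lemma adjoint_S_E_neg {l : Fin d → ℤ} (hl : l ∈ L) (t : Fin d → ℝ) :
    (S l).adjoint (E (-t)) = conj (chiB B (tauL R l t)) • E (-tauL R l t) :=
  ext_inner_right ℂ fun v => by
    rw [ContinuousLinearMap.adjoint_inner_left, inner_smul_left, RCLike.conj_conj,
      h.inner_E_neg_S hl]

lemma inner_E_neg_E_neg (t t' : Fin d → ℝ) :
    ⟪E (-t), E (-t')⟫_ℂ = ∑ l ∈ L, chiB B (tauL R l t) * conj (chiB B (tauL R l t'))
      * ⟪E (-tauL R l t), E (-tauL R l t')⟫_ℂ := by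
  conv_lhs => rw [h.E_neg_eq_sum t']
  rw [inner_sum]
  refine Finset.sum_congr rfl fun l hl => ?_
  rw [inner_smul_right, h.inner_E_neg_S hl]
  ring

end HadamardSetup

lemma SepSets.symm {d : ℕ} {dist' : (Fin d → ℝ) → (Fin d → ℝ) → ℝ}
    (hsymm : ∀ x y, dist' x y = dist' y x) {M₁ M₂ : Set (Fin d → ℝ)} (h : SepSets dist' M₁ M₂) :
    SepSets dist' M₂ M₁ := by
  obtain ⟨δ, hδ, hM⟩ := h
  exact ⟨δ, hδ, fun y hy x hx => hsymm y x ▸ hM x hx y hy⟩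

section Generators

variable {d : ℕ} {μ : Measure (Fin d → ℝ)} {E : (Fin d → ℝ) → Lp ℂ 2 μ}
  {S : (Fin d → ℤ) → Lp ℂ 2 μ →L[ℂ] Lp ℂ 2 μ} {L : Finset (Fin d → ℤ)} {M : Set (Fin d → ℝ)}

lemma E_neg_mem_KM {t : Fin d → ℝ} (ht : t ∈ M) : E (-t) ∈ KM E M :=
  Submodule.le_topologicalClosure _ (Submodule.subset_span ⟨t, ht, rfl⟩)

lemma prod_map_apply_E_neg_mem_HM {t : Fin d → ℝ} (ht : t ∈ M) {w : List (Fin d → ℤ)}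
    (hw : ∀ l ∈ w, l ∈ L) : (w.map S).prod (E (-t)) ∈ HM E S L M :=
  Submodule.le_topologicalClosure _ (Submodule.subset_span ⟨t, ht, w, hw, rfl⟩)

lemma S_mem_HM {l : Fin d → ℤ} (hl : l ∈ L) : ∀ x ∈ HM E S L M, S l x ∈ HM E S L M :=
  Submodule.mapsTo_topologicalClosure_span (Submodule.isClosed_topologicalClosure _) <| by
    rintro _ ⟨t, ht, w, hw, rfl⟩
    refine prod_map_apply_E_neg_mem_HM ht (w := l :: w) ?_
    simpa [hl] using hw

end Generators

namespace HadamardSetup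

variable {d : ℕ} {R : Matrix (Fin d) (Fin d) ℤ} {B L : Finset (Fin d → ℤ)}
  {μ : Measure (Fin d → ℝ)} [IsFiniteMeasure μ] {𝓡 : (Fin d → ℝ) → Fin d → ℝ}
  {S : (Fin d → ℤ) → Lp ℂ 2 μ →L[ℂ] Lp ℂ 2 μ} {E : (Fin d → ℝ) → Lp ℂ 2 μ}
  (h : HadamardSetup R B L μ 𝓡 S E)
include h

lemma adjoint_S_E_neg_mem {M : Set (Fin d → ℝ)} (hM : LInvariant R B L M)
    {K : Submodule ℂ (Lp ℂ 2 μ)} (hK : ∀ t ∈ M, E (-t) ∈ K) {l : Fin d → ℤ} (hl : l ∈ L)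
    {t : Fin d → ℝ} (ht : t ∈ M) : (S l).adjoint (E (-t)) ∈ K := by
  rw [h.adjoint_S_E_neg hl]
  by_cases hχ : chiB B (tauL R l t) = 0
  · rw [hχ, map_zero, zero_smul]
    exact K.zero_mem
  · exact K.smul_mem _ (hK _ (hM t ht l hl hχ))

lemma adjoint_S_mem_KM {M : Set (Fin d → ℝ)} (hM : LInvariant R B L M) {l : Fin d → ℤ}
    (hl : l ∈ L) : ∀ x ∈ KM E M, (S l).adjoint x ∈ KM E M :=
  Submodule.mapsTo_topologicalClosure_span (Submodule.isClosed_topologicalClosure _) <| by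
    rintro _ ⟨t, ht, rfl⟩
    exact h.adjoint_S_E_neg_mem hM (fun t ht => E_neg_mem_KM ht) hl ht

lemma adjoint_S_mem_HM {M : Set (Fin d → ℝ)} (hM : LInvariant R B L M) {l : Fin d → ℤ}
    (hl : l ∈ L) : ∀ x ∈ HM E S L M, (S l).adjoint x ∈ HM E S L M :=
  Submodule.mapsTo_topologicalClosure_span (Submodule.isClosed_topologicalClosure _) <| by
    rintro _ ⟨t, ht, w, hw, rfl⟩
    cases w with
    | nil =>
      exact h.adjoint_S_E_neg_mem hM
        (fun t ht => prod_map_apply_E_neg_mem_HM ht (w := []) (by simp)) hl ht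
    | cons l' w =>
      rw [List.map_cons, List.prod_cons, mul_apply_eq_comp,
        h.adjoint_S_S hl (hw l' List.mem_cons_self)]
      split_ifs
      · exact prod_map_apply_E_neg_mem_HM ht fun a ha => hw a (List.mem_cons_of_mem _ ha)
      · exact Submodule.zero_mem _

variable {M₁ M₂ : Set (Fin d → ℝ)} {dist' : (Fin d → ℝ) → (Fin d → ℝ) → ℝ}
  (hM₁ : LInvariant R B L M₁) (hM₂ : LInvariant R B L M₂)
  (hcontr : ∃ c, 0 ≤ c ∧ c < 1 ∧ ∀ l ∈ L, ∀ x y,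
    dist' (tauL R l x) (tauL R l y) ≤ c * dist' x y)
include hM₁ hM₂ hcontr

lemma inner_E_neg_E_neg_eq_zero (hsep : SepSets dist' M₁ M₂) {t t' : Fin d → ℝ} (ht : t ∈ M₁)
    (ht' : t' ∈ M₂) : ⟪E (-t), E (-t')⟫_ℂ = 0 := by
  obtain ⟨δ, hδ, hsep⟩ := hsep
  obtain ⟨c, hc0, hc1, hc⟩ := hcontr
  suffices key : ∀ n : ℕ, ∀ t ∈ M₁, ∀ t' ∈ M₂, c ^ n * dist' t t' < δ →
      ⟪E (-t), E (-t')⟫_ℂ = 0 by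
    have hpos : 0 < dist' t t' := hδ.trans_le (hsep t ht t' ht')
    obtain ⟨n, hn⟩ := exists_pow_lt_of_lt_one (div_pos hδ hpos) hc1
    exact key n t ht t' ht' ((lt_div_iff₀ hpos).mp hn)
  intro n
  induction n with
  | zero =>
    intro t ht t' ht' hlt
    rw [pow_zero, one_mul] at hlt
    exact absurd (hsep t ht t' ht') (not_le.mpr hlt)
  | succ n ih =>
    intro t ht t' ht' hlt
    rw [h.inner_E_neg_E_neg]
    refine Finset.sum_eq_zero fun l hl => ?_
    by_cases hχ : chiB B (tauL R l t) = 0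
    · rw [hχ, zero_mul, zero_mul]
    by_cases hχ' : chiB B (tauL R l t') = 0
    · rw [hχ', map_zero, mul_zero, zero_mul]
    refine mul_eq_zero_of_right _ (ih _ (hM₁ t ht l hl hχ) _ (hM₂ t' ht' l hl hχ') ?_)
    calc c ^ n * dist' (tauL R l t) (tauL R l t') ≤ c ^ n * (c * dist' t t') := by
          gcongr
          exact hc l hl t t'
      _ = c ^ (n + 1) * dist' t t' := by ring
      _ < δ := hlt

lemma inner_E_neg_prod_map_apply_eq_zero (hsep : SepSets dist' M₁ M₂) {w : List (Fin d → ℤ)}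
    (hw : ∀ l ∈ w, l ∈ L) {t t' : Fin d → ℝ} (ht : t ∈ M₁) (ht' : t' ∈ M₂) :
    ⟪E (-t), (w.map S).prod (E (-t'))⟫_ℂ = 0 := by
  induction w generalizing t with
  | nil => exact h.inner_E_neg_E_neg_eq_zero hM₁ hM₂ hcontr hsep ht ht'
  | cons l w ih =>
    have hl := hw l List.mem_cons_self
    rw [List.map_cons, List.prod_cons, mul_apply_eq_comp, h.inner_E_neg_S hl]
    by_cases hχ : chiB B (tauL R l t) = 0
    · rw [hχ, zero_mul]
    · rw [ih (fun a ha => hw a (List.mem_cons_of_mem _ ha)) (hM₁ t ht l hl hχ), mul_zero]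

lemma isOrtho_HM (hsep : SepSets dist' M₁ M₂) (hsep' : SepSets dist' M₂ M₁) :
    HM E S L M₁ ⟂ HM E S L M₂ := by
  refine (Submodule.isOrtho_span.mpr ?_).topologicalClosure
  rintro _ ⟨t, ht, w, hw, rfl⟩ _ ⟨t', ht', w', hw', rfl⟩
  induction w generalizing w' with
  | nil => exact h.inner_E_neg_prod_map_apply_eq_zero hM₁ hM₂ hcontr hsep hw' ht ht'
  | cons l w ih =>
    cases w' with
    | nil =>
      rw [← inner_conj_symm, List.map_nil, List.prod_nil, one_apply_eq_self,
        h.inner_E_neg_prod_map_apply_eq_zero hM₂ hM₁ hcontr hsep' hw ht' ht, map_zero]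
    | cons l' w' =>
      simp only [List.map_cons, List.prod_cons, mul_apply_eq_comp]
      rw [h.inner_S_S (hw l List.mem_cons_self) (hw' l' List.mem_cons_self)]
      split_ifs
      · exact ih (fun a ha => hw a (List.mem_cons_of_mem _ ha)) _
          fun a ha => hw' a (List.mem_cons_of_mem _ ha)
      · rfl

end HadamardSetup

theorem stmt15_general
    (d N : ℕ) (R : Matrix (Fin d) (Fin d) ℤ) (hRexp : Expansive R)
    (B : Finset (Fin d → ℤ)) (hB0 : (0 : Fin d → ℤ) ∈ B) (hBcard : B.card = N)
    (X : Set (Fin d → ℝ))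
    (hX : X = ⋃ b ∈ B, tauB R b '' X)
    (μ : Measure (Fin d → ℝ)) [IsProbabilityMeasure μ]
    (hμinv : μ = (N : ENNReal)⁻¹ • ∑ b ∈ B, μ.map (tauB R b))
    (hμsupp : μ Xᶜ = 0)
    (𝓡 : (Fin d → ℝ) → (Fin d → ℝ)) (h𝓡meas : Measurable 𝓡)
    (h𝓡 : ∀ b ∈ B, ∀ᵐ x ∂(μ.restrict (tauB R b '' X)),
      𝓡 x = (Rmat R).mulVec x - vecR b)
    (L : Finset (Fin d → ℤ)) (hLcard : L.card = N)
    (hHad : IsHadamardPair R B L)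
    (S : (Fin d → ℤ) → (Lp ℂ 2 μ →L[ℂ] Lp ℂ 2 μ))
    (hS : ∀ l ∈ L, ∀ f : Lp ℂ 2 μ,
      (S l f : (Fin d → ℝ) → ℂ) =ᵐ[μ] fun x => expv (vecR l) x * f (𝓡 x))
    (E : (Fin d → ℝ) → Lp ℂ 2 μ)
    (hE : ∀ t : Fin d → ℝ, (E t : (Fin d → ℝ) → ℂ) =ᵐ[μ] fun x => expv t x)
    (dist' : (Fin d → ℝ) → (Fin d → ℝ) → ℝ)
    (hdsymm : ∀ x y, dist' x y = dist' y x)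
    (hcontr : ∃ c, 0 ≤ c ∧ c < 1 ∧ ∀ l ∈ L, ∀ x y,
      dist' (tauL R l x) (tauL R l y) ≤ c * dist' x y)
    (M : Set (Fin d → ℝ)) (hMinv : LInvariant R B L M) :
    -- (i)
    (∀ l ∈ L, ∀ x ∈ KM E M, ContinuousLinearMap.adjoint (S l) x ∈ KM E M) ∧
    -- (ii)
    (∀ l ∈ L, ∀ x ∈ HM E S L M,
      S l x ∈ HM E S L M ∧ ContinuousLinearMap.adjoint (S l) x ∈ HM E S L M) ∧
    -- (iii)
    (∀ M₁ M₂ : Set (Fin d → ℝ), IsClosed M₁ → IsClosed M₂ →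
      LInvariant R B L M₁ → LInvariant R B L M₂ → SepSets dist' M₁ M₂ →
      ∀ f ∈ HM E S L M₁, ∀ g ∈ HM E S L M₂, (inner ℂ f g : ℂ) = 0) := by
  subst hBcard
  have h : HadamardSetup R B L μ 𝓡 S E :=
    { expansive := hRexp
      nonempty := ⟨0, hB0⟩
      eq_avg := hμinv
      measurable := h𝓡meas
      comp_tauB := fun _ hb => ae_comp_tauB_eq hRexp hμinv hμsupp h𝓡 hb
      exists_eq := ae_exists_eq_mulVec_sub hX hμsupp h𝓡
      hadamard := hHad
      card_eq := hLcard
      S_apply := hS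
      E_apply := hE }
  refine ⟨fun l hl => h.adjoint_S_mem_KM hMinv hl,
    fun l hl x hx => ⟨S_mem_HM hl x hx, h.adjoint_S_mem_HM hMinv hl x hx⟩, ?_⟩
  intro M₁ M₂ _ _ hM₁ hM₂ hsep f hf g hg
  exact (h.isOrtho_HM hM₁ hM₂ hcontr hsep (hsep.symm hdsymm)).inner_eq hf hg

theorem stmt15
    (d N : ℕ) (R : Matrix (Fin d) (Fin d) ℤ) (hRexp : Expansive R)
    (B : Finset (Fin d → ℤ)) (hB0 : (0 : Fin d → ℤ) ∈ B) (hBcard : B.card = N)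
    (X : Set (Fin d → ℝ)) (hXc : IsCompact X) (hXne : X.Nonempty)
    (hX : X = ⋃ b ∈ B, tauB R b '' X)
    (μ : Measure (Fin d → ℝ)) [IsProbabilityMeasure μ]
    (hμinv : μ = (N : ENNReal)⁻¹ • ∑ b ∈ B, μ.map (tauB R b))
    (hμsupp : μ Xᶜ = 0)
    (hnooverlap : ∀ b ∈ B, ∀ b' ∈ B, b ≠ b' →
      μ (tauB R b '' X ∩ tauB R b' '' X) = 0)
    (𝓡 : (Fin d → ℝ) → (Fin d → ℝ)) (h𝓡meas : Measurable 𝓡)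
    (h𝓡 : ∀ b ∈ B, ∀ᵐ x ∂(μ.restrict (tauB R b '' X)),
      𝓡 x = (Rmat R).mulVec x - vecR b)
    (L : Finset (Fin d → ℤ)) (hL0 : (0 : Fin d → ℤ) ∈ L) (hLcard : L.card = N)
    (hHad : IsHadamardPair R B L)
    (S : (Fin d → ℤ) → (Lp ℂ 2 μ →L[ℂ] Lp ℂ 2 μ))
    (hS : ∀ l ∈ L, ∀ f : Lp ℂ 2 μ,
      (S l f : (Fin d → ℝ) → ℂ) =ᵐ[μ] fun x => expv (vecR l) x * f (𝓡 x))
    (E : (Fin d → ℝ) → Lp ℂ 2 μ)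
    (hE : ∀ t : Fin d → ℝ, (E t : (Fin d → ℝ) → ℂ) =ᵐ[μ] fun x => expv t x)
    (dist' : (Fin d → ℝ) → (Fin d → ℝ) → ℝ)
    (hd0 : ∀ x y, dist' x y = 0 ↔ x = y)
    (hdsymm : ∀ x y, dist' x y = dist' y x)
    (hdtri : ∀ x y z, dist' x z ≤ dist' x y + dist' y z)
    (hdtop : ∀ s : Set (Fin d → ℝ),
      IsOpen s ↔ ∀ x ∈ s, ∃ ε > 0, ∀ y, dist' x y < ε → y ∈ s)
    (hcontr : ∃ c, 0 ≤ c ∧ c < 1 ∧ ∀ l ∈ L, ∀ x y,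
      dist' (tauL R l x) (tauL R l y) ≤ c * dist' x y)
    (M : Set (Fin d → ℝ)) (hMcl : IsClosed M) (hMinv : LInvariant R B L M) :
    -- (i)
    (∀ l ∈ L, ∀ x ∈ KM E M, ContinuousLinearMap.adjoint (S l) x ∈ KM E M) ∧
    -- (ii)
    (∀ l ∈ L, ∀ x ∈ HM E S L M,
      S l x ∈ HM E S L M ∧ ContinuousLinearMap.adjoint (S l) x ∈ HM E S L M) ∧
    -- (iii)
    (∀ M₁ M₂ : Set (Fin d → ℝ), IsClosed M₁ → IsClosed M₂ →
      LInvariant R B L M₁ → LInvariant R B L M₂ → SepSets dist' M₁ M₂ →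
      ∀ f ∈ HM E S L M₁, ∀ g ∈ HM E S L M₂, (inner ℂ f g : ℂ) = 0) :=
  stmt15_general d N R hRexp B hB0 hBcard X hX μ hμinv hμsupp 𝓡 h𝓡meas h𝓡 L hLcard hHad S hS E hE
    dist' hdsymm hcontr M hMinv
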